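/- The Thue–Morse measure ν is fixed under the transfer operator associated with g(x) = (1/2)(1 − cos(2πx)): for every continuous function f on the circle, ∫ (g(x/2) f(x/2) + g(x/2 + 1/2) f(x/2 + 1/2)) dν(x) = ∫ f dν. In particular, ν is invariant under the doubling map. -/
import Mathlib

open MeasureTheory

noncomputable def P (n : ℕ) (x : ℝ) : ℝ :=
  ∏ ℓ ∈ Finset.range n, (1 - Real.cos (2 * Real.pi * 2 ^ ℓ * x))

/-- `g(x) = (1 − cos(2πx))/2`. -/
noncomputable def g (x : ℝ) : ℝ := (1 - Real.cos (2 * Real.pi * x)) / 2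

lemma P_continuous (n : ℕ) : Continuous (P n) := by
  unfold P; fun_prop

lemma g_continuous : Continuous g := by unfold g; fun_prop

lemma P_succ (n : ℕ) (x : ℝ) :
    P (n + 1) x = (1 - Real.cos (2 * Real.pi * x)) * P n (2 * x) := by
  unfold P
  rw [Finset.prod_range_succ', mul_comm, pow_zero, mul_one]
  congr 1
  apply Finset.prod_congr rfl
  intro i _
  rw [show 2 * Real.pi * 2 ^ (i+1) * x = 2 * Real.pi * 2 ^ i * (2 * x) by ring]

lemma P_add_one (n : ℕ) (x : ℝ) : P n (x + 1) = P n x := by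
  unfold P
  apply Finset.prod_congr rfl
  intro i _
  congr 1
  have : 2 * Real.pi * 2 ^ i * (x + 1) = 2 * Real.pi * 2 ^ i * x + (2 ^ i : ℤ) * (2 * Real.pi) := by
    push_cast; ring
  rw [this, Real.cos_add_int_mul_two_pi]

lemma key (f : ℝ → ℝ) (hf : Continuous f) (N : ℕ) :
    ∫ x in (0:ℝ)..1, (g (x/2) * f (x/2) + g (x/2 + 1/2) * f (x/2 + 1/2)) * P N x
      = ∫ x in (0:ℝ)..1, f x * P (N+1) x := by
  set h : ℝ → ℝ := fun u => g u * f u * P N (2 * u) with hh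
  have hhc : Continuous h := by
    apply Continuous.mul (Continuous.mul g_continuous hf)
    exact (P_continuous N).comp (continuous_const.mul continuous_id)
  have h1 : ∀ x : ℝ, (g (x/2) * f (x/2) + g (x/2 + 1/2) * f (x/2 + 1/2)) * P N x
      = h (x/2) + h ((x+1)/2) := by
    intro x
    show _ = g (x/2) * f (x/2) * P N (2 * (x/2)) + g ((x+1)/2) * f ((x+1)/2) * P N (2 * ((x+1)/2))
    rw [show 2 * (x/2) = x by ring, show (x+1)/2 = x/2 + 1/2 by ring,
      show 2 * (x/2 + 1/2) = x + 1 by ring, P_add_one]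
    ring
  have h2 : ∀ x : ℝ, f x * P (N+1) x = 2 * h x := by
    intro x
    simp only [hh, P_succ, g]
    ring
  simp only [h1, h2]
  have ia : IntervalIntegrable (fun x : ℝ => h (x/2)) volume 0 1 := by
    apply Continuous.intervalIntegrable; fun_prop
  have ib : IntervalIntegrable (fun x : ℝ => h ((x+1)/2)) volume 0 1 := by
    apply Continuous.intervalIntegrable; fun_prop
  rw [intervalIntegral.integral_add ia ib]
  have i1 : (∫ x in (0:ℝ)..1, h (x / 2)) = (2:ℝ) • ∫ u in (0:ℝ)..(1/2:ℝ), h u := by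
    have := intervalIntegral.integral_comp_div (a := (0:ℝ)) (b := 1) (c := (2:ℝ)) h two_ne_zero
    simpa using this
  have i2 : (∫ x in (0:ℝ)..1, h ((x + 1) / 2)) = (2:ℝ) • ∫ u in (1/2:ℝ)..1, h u := by
    have e : (∫ x in (0:ℝ)..1, h ((x + 1) / 2)) = ∫ x in (1:ℝ)..2, h (x / 2) := by
      have := intervalIntegral.integral_comp_add_right (a := (0:ℝ)) (b := 1)
        (f := fun x => h (x / 2)) 1
      simpa using this
    rw [e]
    have := intervalIntegral.integral_comp_div (a := (1:ℝ)) (b := 2) (c := (2:ℝ)) h two_ne_zero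
    norm_num at this
    simpa using this
  rw [i1, i2, intervalIntegral.integral_const_mul]
  rw [smul_eq_mul, smul_eq_mul, ← mul_add,
    intervalIntegral.integral_add_adjacent_intervals
      (hhc.intervalIntegrable _ _) (hhc.intervalIntegrable _ _)]

/-- The Thue–Morse measure is fixed by the transfer operator `φ_g`, and in
particular is invariant under the doubling map (tested on continuous
`1`-periodic functions, i.e. continuous functions on the circle). -/
theorem nu_fixed_by_transfer_operator (ν : Measure ℝ) [IsProbabilityMeasure ν]
    (hsupp : ν (Set.Ico (0:ℝ) 1)ᶜ = 0)
    (hν : ∀ f : ℝ → ℝ, Continuous f →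
      Filter.Tendsto (fun N => ∫ x in (0:ℝ)..1, f x * P N x) Filter.atTop
        (nhds (∫ x, f x ∂ν))) :
    (∀ f : ℝ → ℝ, Continuous f → Function.Periodic f 1 →
      ∫ x, (g (x/2) * f (x/2) + g (x/2 + 1/2) * f (x/2 + 1/2)) ∂ν = ∫ x, f x ∂ν) ∧
    (∀ f : ℝ → ℝ, Continuous f → Function.Periodic f 1 →
      ∫ x, f (2 * x) ∂ν = ∫ x, f x ∂ν) := by
  have main : ∀ f : ℝ → ℝ, Continuous f →
      ∫ x, (g (x/2) * f (x/2) + g (x/2 + 1/2) * f (x/2 + 1/2)) ∂ν = ∫ x, f x ∂ν := by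
    intro f hf
    set F : ℝ → ℝ := fun x => g (x/2) * f (x/2) + g (x/2 + 1/2) * f (x/2 + 1/2) with hF
    have hFc : Continuous F := by
      apply Continuous.add
      · exact (g_continuous.comp (continuous_id.div_const 2)).mul
          (hf.comp (continuous_id.div_const 2))
      · exact (g_continuous.comp ((continuous_id.div_const 2).add continuous_const)).mul
          (hf.comp ((continuous_id.div_const 2).add continuous_const))
    have t1 := hν F hFc
    have t2 : Filter.Tendsto (fun N => ∫ x in (0:ℝ)..1, f x * P (N+1) x) Filter.atTop
        (nhds (∫ x, f x ∂ν)) :=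
      (hν f hf).comp (Filter.tendsto_add_atTop_nat 1)
    have heq : (fun N => ∫ x in (0:ℝ)..1, F x * P N x)
        = fun N => ∫ x in (0:ℝ)..1, f x * P (N+1) x := by
      funext N; exact key f hf N
    rw [heq] at t1
    exact tendsto_nhds_unique t1 t2
  constructor
  · intro f hf _; exact main f hf
  · intro f hf hper
    have hFc : Continuous (fun x => f (2 * x)) :=
      hf.comp (continuous_const.mul continuous_id)
    have := main (fun x => f (2 * x)) hFc
    have he : ∀ x : ℝ, g (x/2) * f (2 * (x/2)) + g (x/2 + 1/2) * f (2 * (x/2 + 1/2)) = f x := by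
      intro x
      have e1 : 2 * (x / 2) = x := by ring
      have e2 : 2 * (x / 2 + 1/2) = x + 1 := by ring
      rw [e1, e2, hper x]
      have gc : g (x/2 + 1/2) = (1 + Real.cos (2 * Real.pi * (x/2))) / 2 := by
        unfold g
        have : 2 * Real.pi * (x/2 + 1/2) = 2 * Real.pi * (x/2) + Real.pi := by ring
        rw [this, Real.cos_add_pi]
        ring
      rw [gc]
      unfold g
      ring
    simp only [he] at this
    exact this.symm
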